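/- Let α_1 ∈ (1/2, 1) be irrational with continued fraction expansion [0; a_1, a_2, …] (so a_1 = 1) and suppose a_i > 1 for all i ≥ 2. Set α = (α_1, 1 − α_1) ∈ ℝ². Then for every N ≥ 2 and every 1 ≤ q ≤ ∞, one has 1 ≤ g_N(α, ℤ², ‖·‖_q) ≤ 2. -/

import Mathlib

open scoped BigOperators ENNReal NNReal

/-- Distance from a real number to the nearest integer (the torus norm on ℝ/ℤ). -/
noncomputable def nint (t : ℝ) : ℝ := |t - round t|

/-- The `L_q` distance (for `1 ≤ q ≤ ∞`) between two points of the torus `ℝ^d/ℤ^d`,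
computed on representatives in `ℝ^d`. -/
noncomputable def lqDist (q : ℝ≥0∞) {d : ℕ} (x y : Fin d → ℝ) : ℝ :=
  if q = ⊤ then ⨆ i, nint (x i - y i)
  else (∑ i, nint (x i - y i) ^ q.toReal) ^ (1 / q.toReal)

/-- The `n`-th point of the `d`-dimensional Kronecker sequence `z_n = nα + ℤ^d`
(as a representative in `ℝ^d`). -/
noncomputable def kron {d : ℕ} (α : Fin d → ℝ) (n : ℕ) : Fin d → ℝ :=
  fun c => (n : ℝ) * α c

/-- `L_q`-distance on the torus between the `i`-th and `j`-th points of the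
Kronecker sequence of `α`. -/
noncomputable def kronDist (q : ℝ≥0∞) {d : ℕ} (α : Fin d → ℝ) (i j : ℕ) : ℝ :=
  lqDist q (kron α i) (kron α j)

/-- The index `j ∈ {1, …, N} \ {i}` of the nearest neighbor of `z_i` in
`S_N = {z_1, …, z_N}` w.r.t. the `L_q` torus metric; ties are broken by taking
the largest such index. -/
noncomputable def nnIndex (q : ℝ≥0∞) {d : ℕ} (α : Fin d → ℝ) (N i : ℕ) : ℕ :=
  sSup {j : ℕ | j ∈ Finset.Icc 1 N ∧ j ≠ i ∧
    ∀ m ∈ Finset.Icc 1 N, m ≠ i → kronDist q α i j ≤ kronDist q α i m}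

/-- `h_i(N) = |j - i|` where `z_j` is the nearest neighbor of `z_i` in `S_N`:
the counting-metric distance of `z_i` to its nearest neighbor. -/
noncomputable def hFun (q : ℝ≥0∞) {d : ℕ} (α : Fin d → ℝ) (N i : ℕ) : ℕ :=
  Nat.dist (nnIndex q α N i) i

/-- `g_N(α, ℤ^d, ‖·‖_q)`: the number of distinct nearest neighbor distances
among `d_q(z_i, nn_1(z_i))`, `i = 1, …, N`. -/
noncomputable def gN (q : ℝ≥0∞) {d : ℕ} (α : Fin d → ℝ) (N : ℕ) : ℕ :=
  ((Finset.Icc 1 N).image (fun i => kronDist q α i (nnIndex q α N i))).card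

/-- The Gauss map `x ↦ {1/x}` generating the continued fraction expansion. -/
noncomputable def gaussMap (x : ℝ) : ℝ := Int.fract x⁻¹

/-- The partial quotients of the continued fraction expansion `[0; a_1, a_2, …]`
of an irrational `α ∈ (0,1)`: `a_n = ⌊1 / G^[n-1](α)⌋` (with `a_0 = 0`). -/
noncomputable def cfA (α : ℝ) : ℕ → ℕ
  | 0 => 0
  | n + 1 => (⌊(gaussMap^[n] α)⁻¹⌋).toNat

/-- The denominators of the convergents of the continued fraction of `α`:
`q_0 = 1`, `q_1 = a_1`, `q_n = a_n q_{n-1} + q_{n-2}`. -/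
noncomputable def cfQ (α : ℝ) : ℕ → ℕ
  | 0 => 1
  | 1 => cfA α 1
  | n + 2 => cfA α (n + 2) * cfQ α (n + 1) + cfQ α n

/-!
The distance between `z_i` and `z_j` depends only on `k = |i - j|`, and for `α = (θ, 1 - θ)` it
is an increasing function of `‖kθ‖`, since both coordinates contribute `‖kθ‖`. The differences
available to `z_i` in `S_N` are `1, …, M_i` with `M_i = max (i - 1, N - i) ∈ [⌊N/2⌋, N - 1]`, so by
the best approximation property of the convergents its nearest-neighbour distance is attained at
`k = q_n`, where `q_n ≤ M_i < q_{n+1}`. Choosing `n` with `q_n ≤ ⌊N/2⌋ < q_{n+1}`, the hypothesis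
`a_{n+2} ≥ 2` gives `q_{n+2} ≥ 2 q_{n+1} > N - 1`, so only `q_n` and `q_{n+1}` occur.
-/

open Finset

lemma nint_le (t : ℝ) (m : ℤ) : nint t ≤ |t - m| := round_le t m

lemma nint_add_intCast (t : ℝ) (m : ℤ) : nint (t + m) = nint t := by
  rw [nint, nint, round_add_intCast, Int.cast_add, add_sub_add_right_eq_sub]

lemma nint_neg (t : ℝ) : nint (-t) = nint t := by
  have neg_le (s : ℝ) : nint (-s) ≤ nint s :=
    calc nint (-s) ≤ |-s - ((-round s : ℤ) : ℝ)| := nint_le _ _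
      _ = nint s := by rw [nint, ← abs_neg]; congr 1; push_cast; ring
  exact le_antisymm (neg_le t) (by simpa using neg_le (-t))

lemma nint_natCast_mul_sub (a : ℝ) (i j : ℕ) :
    nint (i * a - j * a) = nint (Nat.dist i j * a) := by
  rcases le_total j i with h | h
  · rw [Nat.dist_eq_sub_of_le_right h, Nat.cast_sub h, sub_mul]
  · rw [Nat.dist_eq_sub_of_le h, Nat.cast_sub h, sub_mul, ← nint_neg, neg_sub]

lemma lqDist_mono (q : ℝ≥0∞) {d : ℕ} {x y x' y' : Fin d → ℝ}
    (h : ∀ c, nint (x c - y c) ≤ nint (x' c - y' c)) : lqDist q x y ≤ lqDist q x' y' := by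
  unfold lqDist
  split_ifs
  · exact ciSup_mono (Set.finite_range _).bddAbove h
  · gcongr with c
    · exact sum_nonneg fun c _ => Real.rpow_nonneg (abs_nonneg _) _
    · exact abs_nonneg _
    · exact h c

lemma kronDist_eq_kronDist_natDist (q : ℝ≥0∞) {d : ℕ} (α : Fin d → ℝ) (i j : ℕ) :
    kronDist q α i j = kronDist q α (Nat.dist i j) 0 := by
  simp only [kronDist, lqDist, kron, Nat.cast_zero, zero_mul, sub_zero, nint_natCast_mul_sub]

lemma kronDist_pair_le_of_nint_le (q : ℝ≥0∞) (θ : ℝ) {k l : ℕ}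
    (h : nint (k * θ) ≤ nint (l * θ)) :
    kronDist q ![θ, 1 - θ] k 0 ≤ kronDist q ![θ, 1 - θ] l 0 := by
  have hcoord (n : ℕ) : nint (n * (1 - θ)) = nint (n * θ) := by
    rw [show (n : ℝ) * (1 - θ) = -(n * θ) + ((n : ℤ) : ℝ) by push_cast; ring,
      nint_add_intCast, nint_neg]
  refine lqDist_mono q fun c => ?_
  fin_cases c <;> simpa [kron, hcoord] using h

lemma natDist_mem_Icc_max {N i j : ℕ} (hi : i ∈ Icc 1 N) (hj : j ∈ Icc 1 N) (hji : j ≠ i) :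
    Nat.dist i j ∈ Icc 1 (max (i - 1) (N - i)) := by
  rw [mem_Icc] at hi hj ⊢
  simp only [Nat.dist]
  omega

lemma exists_natDist_eq {N i k : ℕ} (hi : i ∈ Icc 1 N) (hk : k ∈ Icc 1 (max (i - 1) (N - i))) :
    ∃ j ∈ Icc 1 N, j ≠ i ∧ Nat.dist i j = k := by
  rw [mem_Icc] at hi hk
  rcases le_or_gt k (i - 1) with h | h
  · exact ⟨i - k, mem_Icc.2 (by omega), by omega, by simp only [Nat.dist]; omega⟩
  · exact ⟨i + k, mem_Icc.2 (by omega), by omega, by simp only [Nat.dist]; omega⟩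

lemma nnIndex_spec (q : ℝ≥0∞) {d : ℕ} (α : Fin d → ℝ) {N i : ℕ} (h : ∃ j ∈ Icc 1 N, j ≠ i) :
    nnIndex q α N i ∈ Icc 1 N ∧ nnIndex q α N i ≠ i ∧
      ∀ m ∈ Icc 1 N, m ≠ i → kronDist q α i (nnIndex q α N i) ≤ kronDist q α i m := by
  obtain ⟨j, hj, hji⟩ := h
  obtain ⟨j₀, hj₀, hmin⟩ :=
    exists_min_image ((Icc 1 N).erase i) (kronDist q α i) ⟨j, mem_erase.2 ⟨hji, hj⟩⟩
  rw [mem_erase] at hj₀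
  let S : Set ℕ := {j | j ∈ Icc 1 N ∧ j ≠ i ∧
    ∀ m ∈ Icc 1 N, m ≠ i → kronDist q α i j ≤ kronDist q α i m}
  exact Nat.sSup_mem (s := S) ⟨j₀, hj₀.2, hj₀.1, fun m hm hmi => hmin m (mem_erase.2 ⟨hmi, hm⟩)⟩
    ⟨N, fun j hj => (mem_Icc.1 hj.1).2⟩

lemma kronDist_nnIndex_eq (q : ℝ≥0∞) {d : ℕ} (α : Fin d → ℝ) {N i k₀ : ℕ}
    (hi : i ∈ Icc 1 N) (hk₀ : k₀ ∈ Icc 1 (max (i - 1) (N - i)))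
    (hmin : ∀ k ∈ Icc 1 (max (i - 1) (N - i)), kronDist q α k₀ 0 ≤ kronDist q α k 0) :
    kronDist q α i (nnIndex q α N i) = kronDist q α k₀ 0 := by
  obtain ⟨j₀, hj₀, hj₀i, hdist⟩ := exists_natDist_eq hi hk₀
  obtain ⟨hj, hji, hle⟩ := nnIndex_spec q α ⟨j₀, hj₀, hj₀i⟩
  rw [kronDist_eq_kronDist_natDist] at hle ⊢
  refine le_antisymm ?_ (hmin _ (natDist_mem_Icc_max hi hj hji))
  simpa only [kronDist_eq_kronDist_natDist q α i j₀, hdist] using hle j₀ hj₀ hj₀i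

lemma gaussMap_pos {x : ℝ} (hx : Irrational x) : 0 < gaussMap x := by
  refine (Int.fract_nonneg _).lt_of_ne fun h => ?_
  have := hx.inv.sub_intCast ⌊x⁻¹⌋
  rw [← Int.fract, ← h] at this
  exact this.ne_zero rfl

lemma irrational_gaussMap_iterate {θ : ℝ} (hirr : Irrational θ) (n : ℕ) :
    Irrational (gaussMap^[n] θ) := by
  induction n with
  | zero => exact hirr
  | succ n ih =>
    rw [Function.iterate_succ_apply', gaussMap, Int.fract]
    exact ih.inv.sub_intCast _

lemma gaussMap_iterate_mem_Ioo {θ : ℝ} (hθ : θ ∈ Set.Ioo 0 1) (hirr : Irrational θ) (n : ℕ) :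
    gaussMap^[n] θ ∈ Set.Ioo 0 1 := by
  cases n with
  | zero => exact hθ
  | succ n =>
    rw [Function.iterate_succ_apply']
    exact ⟨gaussMap_pos (irrational_gaussMap_iterate hirr n), Int.fract_lt_one _⟩

lemma one_le_floor_inv_gaussMap_iterate {θ : ℝ} (hθ : θ ∈ Set.Ioo 0 1) (hirr : Irrational θ)
    (n : ℕ) : 1 ≤ ⌊(gaussMap^[n] θ)⁻¹⌋ := by
  obtain ⟨h0, h1⟩ := gaussMap_iterate_mem_Ioo hθ hirr n
  exact Int.le_floor.2 (by simpa using (one_le_inv₀ h0).2 h1.le)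

lemma natCast_cfA_succ {θ : ℝ} (hθ : θ ∈ Set.Ioo 0 1) (hirr : Irrational θ) (n : ℕ) :
    (cfA θ (n + 1) : ℤ) = ⌊(gaussMap^[n] θ)⁻¹⌋ :=
  Int.toNat_of_nonneg (zero_le_one.trans (one_le_floor_inv_gaussMap_iterate hθ hirr n))

lemma one_le_cfA {θ : ℝ} (hθ : θ ∈ Set.Ioo 0 1) (hirr : Irrational θ) (n : ℕ) :
    1 ≤ cfA θ (n + 1) := by
  have := natCast_cfA_succ hθ hirr n
  have := one_le_floor_inv_gaussMap_iterate hθ hirr n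
  omega

lemma gaussMap_iterate_succ {θ : ℝ} (hθ : θ ∈ Set.Ioo 0 1) (hirr : Irrational θ) (n : ℕ) :
    gaussMap^[n + 1] θ = (gaussMap^[n] θ)⁻¹ - cfA θ (n + 1) := by
  rw [Function.iterate_succ_apply', gaussMap, Int.fract, ← natCast_cfA_succ hθ hirr n,
    Int.cast_natCast]

noncomputable def cfP (θ : ℝ) : ℕ → ℕ
  | 0 => 0
  | 1 => 1
  | n + 2 => cfA θ (n + 2) * cfP θ (n + 1) + cfP θ n

/-- `β_n = t_0 t_1 ⋯ t_n` with `t_k = G^k(θ)`; it equals `|q_n θ - p_n|`. -/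
noncomputable def cfError (θ : ℝ) (n : ℕ) : ℝ := ∏ k ∈ range (n + 1), gaussMap^[k] θ

lemma cfError_pos {θ : ℝ} (hθ : θ ∈ Set.Ioo 0 1) (hirr : Irrational θ) (n : ℕ) :
    0 < cfError θ n :=
  prod_pos fun k _ => (gaussMap_iterate_mem_Ioo hθ hirr k).1

lemma cfError_one {θ : ℝ} (hθ : θ ∈ Set.Ioo 0 1) (hirr : Irrational θ) :
    cfError θ 1 = 1 - cfA θ 1 * θ := by
  have hθ0 : θ ≠ 0 := hθ.1.ne'
  simp only [cfError, prod_range_succ, range_zero, prod_empty, one_mul,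
    gaussMap_iterate_succ hθ hirr 0, Function.iterate_zero_apply]
  field_simp

lemma cfError_add_two {θ : ℝ} (hθ : θ ∈ Set.Ioo 0 1) (hirr : Irrational θ) (n : ℕ) :
    cfError θ (n + 2) = cfError θ n - cfA θ (n + 2) * cfError θ (n + 1) := by
  have ht : gaussMap^[n + 1] θ ≠ 0 := (gaussMap_iterate_mem_Ioo hθ hirr (n + 1)).1.ne'
  simp only [cfError, prod_range_succ _ (n + 2), prod_range_succ _ (n + 1),
    gaussMap_iterate_succ hθ hirr (n + 1)]
  field_simp

lemma cfQ_mul_sub_cfP {θ : ℝ} (hθ : θ ∈ Set.Ioo 0 1) (hirr : Irrational θ) :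
    ∀ n, (cfQ θ n : ℝ) * θ - cfP θ n = (-1) ^ n * cfError θ n
  | 0 => by simp [cfQ, cfP, cfError]
  | 1 => by rw [cfError_one hθ hirr]; simp [cfQ, cfP]
  | n + 2 => by
    have ih₀ := cfQ_mul_sub_cfP hθ hirr n
    have ih₁ := cfQ_mul_sub_cfP hθ hirr (n + 1)
    simp only [cfQ, cfP, Nat.cast_add, Nat.cast_mul, cfError_add_two hθ hirr n]
    linear_combination ih₀ + (cfA θ (n + 2) : ℝ) * ih₁

lemma cfP_mul_cfQ_sub (θ : ℝ) :
    ∀ n, (cfP θ n : ℤ) * cfQ θ (n + 1) - cfP θ (n + 1) * cfQ θ n = (-1) ^ (n + 1)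
  | 0 => by simp [cfP, cfQ]
  | n + 1 => by
    have ih := cfP_mul_cfQ_sub θ n
    simp only [cfQ, cfP, Nat.cast_add, Nat.cast_mul]
    linear_combination -ih

lemma one_le_cfQ {θ : ℝ} (hθ : θ ∈ Set.Ioo 0 1) (hirr : Irrational θ) :
    ∀ n, 1 ≤ cfQ θ n
  | 0 => le_rfl
  | 1 => one_le_cfA hθ hirr 0
  | n + 2 => by
    have := one_le_cfA hθ hirr (n + 1)
    have := one_le_cfQ hθ hirr (n + 1)
    simp only [cfQ]
    nlinarith

lemma le_cfQ {θ : ℝ} (hθ : θ ∈ Set.Ioo 0 1) (hirr : Irrational θ) : ∀ n, n ≤ cfQ θ n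
  | 0 => Nat.zero_le _
  | 1 => one_le_cfA hθ hirr 0
  | n + 2 => by
    have := one_le_cfA hθ hirr (n + 1)
    have := le_cfQ hθ hirr (n + 1)
    have := one_le_cfQ hθ hirr n
    simp only [cfQ]
    nlinarith

lemma exists_cfQ_le_lt {θ : ℝ} (hθ : θ ∈ Set.Ioo 0 1) (hirr : Irrational θ) {L : ℕ}
    (hL : 1 ≤ L) : ∃ n, cfQ θ n ≤ L ∧ L < cfQ θ (n + 1) := by
  have hex : ∃ n, L < cfQ θ (n + 1) := ⟨L, le_cfQ hθ hirr (L + 1)⟩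
  refine ⟨Nat.find hex, ?_, Nat.find_spec hex⟩
  rcases Nat.eq_zero_or_eq_succ_pred (Nat.find hex) with h | h
  · rwa [h, cfQ]
  · rw [h]
    exact not_lt.1 (Nat.find_min hex (m := (Nat.find hex).pred) (by omega))

lemma exists_eq_cfQ_comb_of_eq_cfP_comb (θ : ℝ) (n : ℕ) (k p : ℤ) :
    ∃ x y : ℤ, k = x * cfQ θ n + y * cfQ θ (n + 1) ∧ p = x * cfP θ n + y * cfP θ (n + 1) := by
  set δ : ℤ := (-1) ^ (n + 1)
  have hdet := cfP_mul_cfQ_sub θ n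
  have hδ : δ * δ = 1 := by rw [← pow_add, Even.neg_one_pow ⟨n + 1, rfl⟩]
  refine ⟨δ * (p * cfQ θ (n + 1) - k * cfP θ (n + 1)), δ * (k * cfP θ n - p * cfQ θ n), ?_, ?_⟩
  · linear_combination (-δ * k) * hdet - k * hδ
  · linear_combination (-δ * p) * hdet - p * hδ

lemma ne_zero_and_mul_nonpos_of_lt {Q Q' x y : ℤ} (hQ : 0 ≤ Q)
    (hpos : 0 < x * Q + y * Q') (hlt : x * Q + y * Q' < Q') : x ≠ 0 ∧ x * y ≤ 0 := by
  have hQ' : 0 < Q' := hpos.trans hlt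
  constructor
  · rintro rfl
    rw [zero_mul, zero_add] at hpos hlt
    have hy : 0 < y := (pos_iff_pos_of_mul_pos hpos).2 hQ'
    nlinarith
  · by_contra! h
    rcases mul_pos_iff.1 h with ⟨hx, hy⟩ | ⟨hx, hy⟩ <;> nlinarith

lemma le_abs_mul_sub_mul {b b' : ℝ} (hb : 0 ≤ b) (hb' : 0 ≤ b') {x y : ℤ} (hx : x ≠ 0)
    (hxy : x * y ≤ 0) : b ≤ |x * b - y * b'| := by
  rcases lt_or_gt_of_ne hx with hx | hx
  · have hy : (0 : ℝ) ≤ y := by exact_mod_cast nonneg_of_mul_nonpos_right hxy hx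
    have hx : (x : ℝ) ≤ -1 := by exact_mod_cast Int.le_sub_one_of_lt hx
    rw [abs_of_nonpos (by nlinarith)]
    nlinarith
  · have hy : (y : ℝ) ≤ 0 := by exact_mod_cast nonpos_of_mul_nonpos_right hxy hx
    have hx : (1 : ℝ) ≤ x := by exact_mod_cast hx
    rw [abs_of_nonneg (by nlinarith)]
    nlinarith

lemma cfError_le_abs_mul_sub {θ : ℝ} (hθ : θ ∈ Set.Ioo 0 1) (hirr : Irrational θ) {n k : ℕ}
    (hk : 1 ≤ k) (hk' : k < cfQ θ (n + 1)) (p : ℤ) : cfError θ n ≤ |k * θ - p| := by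
  -- `(q_n, p_n), (q_{n+1}, p_{n+1})` is a basis of `ℤ²`, and `0 < k < q_{n+1}` forces the
  -- coordinates of `(k, p)` to be of opposite signs, with the first one nonzero.
  obtain ⟨x, y, hkxy, hpxy⟩ := exists_eq_cfQ_comb_of_eq_cfP_comb θ n k p
  obtain ⟨hx, hxy⟩ := ne_zero_and_mul_nonpos_of_lt (Nat.cast_nonneg (cfQ θ n))
    (hkxy ▸ Int.natCast_pos.2 hk) (hkxy ▸ Int.ofNat_lt.2 hk')
  have hsplit : (k : ℝ) * θ - p = (-1) ^ n * (x * cfError θ n - y * cfError θ (n + 1)) := by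
    have hk : (k : ℝ) = x * cfQ θ n + y * cfQ θ (n + 1) := by exact_mod_cast hkxy
    have hp : (p : ℝ) = x * cfP θ n + y * cfP θ (n + 1) := by exact_mod_cast hpxy
    rw [hk, hp]
    linear_combination x * cfQ_mul_sub_cfP hθ hirr n + y * cfQ_mul_sub_cfP hθ hirr (n + 1)
  rw [hsplit, abs_mul, abs_neg_one_pow, one_mul]
  exact le_abs_mul_sub_mul (cfError_pos hθ hirr n).le (cfError_pos hθ hirr (n + 1)).le hx hxy

lemma nint_cfQ_mul_le {θ : ℝ} (hθ : θ ∈ Set.Ioo 0 1) (hirr : Irrational θ) {n k : ℕ}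
    (hk : 1 ≤ k) (hk' : k < cfQ θ (n + 1)) : nint (cfQ θ n * θ) ≤ nint (k * θ) :=
  calc nint (cfQ θ n * θ) ≤ |cfQ θ n * θ - ((cfP θ n : ℤ) : ℝ)| := nint_le _ _
    _ = cfError θ n := by
      rw [Int.cast_natCast, cfQ_mul_sub_cfP hθ hirr, abs_mul, abs_neg_one_pow, one_mul,
        abs_of_pos (cfError_pos hθ hirr n)]
    _ ≤ nint (k * θ) := cfError_le_abs_mul_sub hθ hirr hk hk' _

lemma max_sub_mem_Icc {N i : ℕ} (hi : i ∈ Icc 1 N) : max (i - 1) (N - i) ∈ Icc (N / 2) (N - 1) := by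
  rw [mem_Icc] at hi ⊢
  omega

lemma kronDist_pair_nnIndex_eq_cfQ {θ : ℝ} (hθ : θ ∈ Set.Ioo 0 1) (hirr : Irrational θ)
    (q : ℝ≥0∞) {N i n : ℕ} (hi : i ∈ Icc 1 N) (hn : cfQ θ n ≤ max (i - 1) (N - i))
    (hn' : max (i - 1) (N - i) < cfQ θ (n + 1)) :
    kronDist q ![θ, 1 - θ] i (nnIndex q ![θ, 1 - θ] N i) = kronDist q ![θ, 1 - θ] (cfQ θ n) 0 :=
  kronDist_nnIndex_eq q _ hi (mem_Icc.2 ⟨one_le_cfQ hθ hirr n, hn⟩) fun _ hk =>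
    kronDist_pair_le_of_nint_le q θ <|
      nint_cfQ_mul_le hθ hirr (mem_Icc.1 hk).1 ((mem_Icc.1 hk).2.trans_lt hn')

theorem statement3_general (α1 : ℝ) (hmem : α1 ∈ Set.Ioo (1/2 : ℝ) 1) (hirr : Irrational α1)
    (ha : ∀ i, 2 ≤ i → 1 < cfA α1 i)
    (N : ℕ) (hN : 2 ≤ N) (q : ℝ≥0∞) :
    1 ≤ gN q ![α1, 1 - α1] N ∧ gN q ![α1, 1 - α1] N ≤ 2 := by
  have hθ : α1 ∈ Set.Ioo 0 1 := ⟨by linarith [hmem.1], hmem.2⟩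
  obtain ⟨n, hn, hn'⟩ := exists_cfQ_le_lt hθ hirr (L := N / 2) (by omega)
  have hgrowth : N - 1 < cfQ α1 (n + 2) := by
    have h2 : 2 * cfQ α1 (n + 1) ≤ cfQ α1 (n + 2) := by
      have := ha (n + 2) le_add_self
      simp only [cfQ]
      nlinarith
    omega
  let nnDist (m : ℕ) : ℝ := kronDist q ![α1, 1 - α1] (cfQ α1 m) 0
  unfold gN
  refine ⟨card_pos.2 ((nonempty_Icc.2 (by omega)).image _),
    (card_le_card ?_).trans (card_le_two (a := nnDist n) (b := nnDist (n + 1)))⟩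
  intro x hx
  obtain ⟨i, hi, rfl⟩ := mem_image.1 hx
  have hM := mem_Icc.1 (max_sub_mem_Icc hi)
  rcases lt_or_ge (max (i - 1) (N - i)) (cfQ α1 (n + 1)) with h | h
  · rw [kronDist_pair_nnIndex_eq_cfQ hθ hirr q hi (hn.trans hM.1) h]
    exact mem_insert_self _ _
  · rw [kronDist_pair_nnIndex_eq_cfQ hθ hirr q hi h (hM.2.trans_lt hgrowth)]
    exact mem_insert_of_mem (mem_singleton_self _)

/-- For irrational `α_1 ∈ (1/2, 1)` with partial quotients `a_i > 1` for
all `i ≥ 2` and `α = (α_1, 1 - α_1)`, for every `N ≥ 2` and `1 ≤ q ≤ ∞` one has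
`1 ≤ g_N(α, ℤ², ‖·‖_q) ≤ 2`. -/
theorem statement3 (α1 : ℝ) (hmem : α1 ∈ Set.Ioo (1/2 : ℝ) 1) (hirr : Irrational α1)
    (ha : ∀ i, 2 ≤ i → 1 < cfA α1 i)
    (N : ℕ) (hN : 2 ≤ N) (q : ℝ≥0∞) (hq : 1 ≤ q) :
    1 ≤ gN q ![α1, 1 - α1] N ∧ gN q ![α1, 1 - α1] N ≤ 2 :=
  statement3_general α1 hmem hirr ha N hN q
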